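/- arXiv:1803.07819 — 3 statements merged into one kernel-verified Lean document; each statement's English description precedes it below -/
import Mathlib

section
/- For probability densities p and q with respect to a measure μ on a Borel set E, with p + q > 0, the discriminator D* = p/(p+q) satisfies ∫ ln(D*) p dμ + ∫ ln(1−D*) q dμ = 2·D_JS(p‖q) − ln 4, where D_JS is the Jensen-Shannon divergence. -/
open MeasureTheory Real

/-- Jensen-Shannon divergence between densities `p` and `q` with respect to `μ`:
`D_JS(p‖q) = (1/2) D_KL(p‖(p+q)/2) + (1/2) D_KL(q‖(p+q)/2)`. -/
noncomputable def JSdiv {E : Type*} [MeasurableSpace E] (μ : Measure E) (p q : E → ℝ) : ℝ :=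
  (1 / 2) * ∫ x, p x * Real.log (2 * p x / (p x + q x)) ∂μ +
  (1 / 2) * ∫ x, q x * Real.log (2 * q x / (p x + q x)) ∂μ

/-- The optimal discriminator `D* = p/(p+q)` satisfies
`∫ ln(D*) p dμ + ∫ ln(1−D*) q dμ = 2 D_JS(p‖q) − ln 4`. -/
theorem stmt0 {E : Type*} [MeasurableSpace E] (μ : Measure E) [SigmaFinite μ]
    (p q : E → ℝ) (hpm : Measurable p) (hqm : Measurable q)
    (hp0 : ∀ x, 0 ≤ p x) (hq0 : ∀ x, 0 ≤ q x)
    (hp1 : ∫ x, p x ∂μ = 1) (hq1 : ∫ x, q x ∂μ = 1)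
    (hpq : ∀ x, 0 < p x + q x)
    (h1 : Integrable (fun x => p x * Real.log (p x / (p x + q x))) μ)
    (h2 : Integrable (fun x => q x * Real.log (1 - p x / (p x + q x))) μ)
    (h3 : Integrable (fun x => p x * Real.log (2 * p x / (p x + q x))) μ)
    (h4 : Integrable (fun x => q x * Real.log (2 * q x / (p x + q x))) μ) :
    (∫ x, p x * Real.log (p x / (p x + q x)) ∂μ) +
      (∫ x, q x * Real.log (1 - p x / (p x + q x)) ∂μ) =
      2 * JSdiv μ p q - Real.log 4 := by
  have hpI : Integrable p μ := by
    by_contra h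
    rw [integral_undef h] at hp1; norm_num at hp1
  have hqI : Integrable q μ := by
    by_contra h
    rw [integral_undef h] at hq1; norm_num at hq1
  have key1 : ∀ x, p x * Real.log (p x / (p x + q x)) =
      p x * Real.log (2 * p x / (p x + q x)) - p x * Real.log 2 := by
    intro x
    rcases (hp0 x).eq_or_lt with h | h
    · simp [← h]
    · have hd : p x / (p x + q x) ≠ 0 := ne_of_gt (div_pos h (hpq x))
      rw [show (2 : ℝ) * p x / (p x + q x) = 2 * (p x / (p x + q x)) by ring,
        Real.log_mul two_ne_zero hd]
      ring
  have key2 : ∀ x, q x * Real.log (1 - p x / (p x + q x)) =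
      q x * Real.log (2 * q x / (p x + q x)) - q x * Real.log 2 := by
    intro x
    have hne := (hpq x).ne'
    have hq : 1 - p x / (p x + q x) = q x / (p x + q x) := by
      field_simp
      ring
    rw [hq]
    rcases (hq0 x).eq_or_lt with h | h
    · simp [← h]
    · have hd : q x / (p x + q x) ≠ 0 := ne_of_gt (div_pos h (hpq x))
      rw [show (2 : ℝ) * q x / (p x + q x) = 2 * (q x / (p x + q x)) by ring,
        Real.log_mul two_ne_zero hd]
      ring
  have e1 : (∫ x, p x * Real.log (p x / (p x + q x)) ∂μ) =
      (∫ x, p x * Real.log (2 * p x / (p x + q x)) ∂μ) - Real.log 2 := by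
    calc (∫ x, p x * Real.log (p x / (p x + q x)) ∂μ)
        = ∫ x, (p x * Real.log (2 * p x / (p x + q x)) - p x * Real.log 2) ∂μ := by
          exact integral_congr_ae (Filter.Eventually.of_forall key1)
      _ = (∫ x, p x * Real.log (2 * p x / (p x + q x)) ∂μ) -
            ∫ x, p x * Real.log 2 ∂μ :=
          integral_sub h3 (hpI.mul_const _)
      _ = (∫ x, p x * Real.log (2 * p x / (p x + q x)) ∂μ) - Real.log 2 := by
          rw [integral_mul_const, hp1, one_mul]
  have e2 : (∫ x, q x * Real.log (1 - p x / (p x + q x)) ∂μ) =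
      (∫ x, q x * Real.log (2 * q x / (p x + q x)) ∂μ) - Real.log 2 := by
    calc (∫ x, q x * Real.log (1 - p x / (p x + q x)) ∂μ)
        = ∫ x, (q x * Real.log (2 * q x / (p x + q x)) - q x * Real.log 2) ∂μ := by
          exact integral_congr_ae (Filter.Eventually.of_forall key2)
      _ = (∫ x, q x * Real.log (2 * q x / (p x + q x)) ∂μ) -
            ∫ x, q x * Real.log 2 ∂μ :=
          integral_sub h4 (hqI.mul_const _)
      _ = (∫ x, q x * Real.log (2 * q x / (p x + q x)) ∂μ) - Real.log 2 := by
          rw [integral_mul_const, hq1, one_mul]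
  have h4eq : Real.log 4 = 2 * Real.log 2 := by
    rw [show (4 : ℝ) = 2 ^ 2 by norm_num, Real.log_pow]; ring
  rw [e1, e2, JSdiv, h4eq]
  ring
end

section
/- For any probability densities p, q with respect to μ, the supremum over all Borel discriminators D : E → [0,1] of L(D) = ∫ ln(D) p dμ + ∫ ln(1−D) q dμ lies in the interval [−ln 4, 0]. -/
open MeasureTheory Real

/-! The criterion is at most `0` because `ln D ≤ 0` and `ln (1 - D) ≤ 0` pointwise, and the constant
discriminator `D = 1/2` attains `ln (1/2) + ln (1/2) = -ln 4` since `p` and `q` have mass one. -/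

lemma csSup_mem_Icc_of_mem_of_forall_le {S : Set ℝ} {a b : ℝ} (ha : a ∈ S)
    (hb : ∀ y ∈ S, y ≤ b) : sSup S ∈ Set.Icc a b :=
  ⟨le_csSup ⟨b, hb⟩ ha, csSup_le ⟨a, ha⟩ hb⟩

lemma integral_mul_log_nonpos {E : Type*} [MeasurableSpace E] {μ : Measure E} {f g : E → ℝ}
    (hf : ∀ x, 0 ≤ f x) (hg0 : ∀ x, 0 ≤ g x) (hg1 : ∀ x, g x ≤ 1) :
    ∫ x, f x * log (g x) ∂μ ≤ 0 :=
  integral_nonpos fun x => mul_nonpos_of_nonneg_of_nonpos (hf x) (log_nonpos (hg0 x) (hg1 x))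

lemma log_half_add_log_one_sub_half : log (1 / 2) + log (1 - 1 / 2) = -log 4 := by
  have h4 : (4 : ℝ) = 2 ^ 2 := by norm_num
  rw [show (1 : ℝ) - 1 / 2 = 1 / 2 by norm_num, one_div, log_inv, h4, log_pow]
  push_cast
  ring

theorem stmt2_general {E : Type*} [MeasurableSpace E] (μ : Measure E)
    (p q : E → ℝ)
    (hp0 : ∀ x, 0 ≤ p x) (hq0 : ∀ x, 0 ≤ q x)
    (hpi : Integrable p μ) (hqi : Integrable q μ)
    (hp1 : ∫ x, p x ∂μ = 1) (hq1 : ∫ x, q x ∂μ = 1) :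
    sSup {y : ℝ | ∃ D : E → ℝ, Measurable D ∧ (∀ x, D x ∈ Set.Icc (0 : ℝ) 1) ∧
        Integrable (fun x => p x * Real.log (D x)) μ ∧
        Integrable (fun x => q x * Real.log (1 - D x)) μ ∧
        y = (∫ x, p x * Real.log (D x) ∂μ) + (∫ x, q x * Real.log (1 - D x) ∂μ)}
      ∈ Set.Icc (-Real.log 4) 0 := by
  apply csSup_mem_Icc_of_mem_of_forall_le
  · refine ⟨fun _ => 1 / 2, measurable_const, fun _ => ⟨by norm_num, by norm_num⟩,
      hpi.mul_const _, hqi.mul_const _, ?_⟩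
    rw [integral_mul_const, integral_mul_const, hp1, hq1, one_mul, one_mul,
      log_half_add_log_one_sub_half]
  · rintro y ⟨D, -, hD, -, -, rfl⟩
    have hp : ∫ x, p x * log (D x) ∂μ ≤ 0 :=
      integral_mul_log_nonpos hp0 (fun x => (hD x).1) (fun x => (hD x).2)
    have hq : ∫ x, q x * log (1 - D x) ∂μ ≤ 0 :=
      integral_mul_log_nonpos hq0 (fun x => sub_nonneg.2 (hD x).2)
        (fun x => sub_le_self _ (hD x).1)
    linarith

/-- The supremum over all Borel discriminators `D : E → [0,1]` (with finite criterion)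
of `L(D) = ∫ ln(D) p dμ + ∫ ln(1−D) q dμ` lies in `[−ln 4, 0]`. -/
theorem stmt2 {E : Type*} [MeasurableSpace E] (μ : Measure E) [SigmaFinite μ]
    (p q : E → ℝ) (hpm : Measurable p) (hqm : Measurable q)
    (hp0 : ∀ x, 0 ≤ p x) (hq0 : ∀ x, 0 ≤ q x)
    (hpi : Integrable p μ) (hqi : Integrable q μ)
    (hp1 : ∫ x, p x ∂μ = 1) (hq1 : ∫ x, q x ∂μ = 1) :
    sSup {y : ℝ | ∃ D : E → ℝ, Measurable D ∧ (∀ x, D x ∈ Set.Icc (0 : ℝ) 1) ∧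
        Integrable (fun x => p x * Real.log (D x)) μ ∧
        Integrable (fun x => q x * Real.log (1 - D x)) μ ∧
        y = (∫ x, p x * Real.log (D x) ∂μ) + (∫ x, q x * Real.log (1 - D x) ∂μ)}
      ∈ Set.Icc (-Real.log 4) 0 :=
  stmt2_general μ p q hp0 hq0 hpi hqi hp1 hq1
end

section
/- Let p* be a probability density with m ≤ p* ≤ M (0 < m ≤ M), and let {P_θ}_{θ∈Θ} be an identifiable, convex family of probability measures with densities p_θ ≤ M, compact for the Jensen-Shannon metric δ(P,Q) = √(D_JS(P‖Q)). Then there exists a unique θ* ∈ Θ minimizing θ ↦ D_JS(p*‖p_θ) over Θ. -/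
/-!
Existence is the extreme value theorem for the continuous criterion on the compact
parameter space. For uniqueness, the integrand of `D_JS(p*‖q)` at `x` is a strictly convex
function of `q(x) ∈ [0, ∞)` because `p*(x) > 0`, and all integrands are bounded, hence
integrable. So if two minimizers had densities differing on a set of positive
measure, the density of their midpoint, which lies in the model by convexity, would have
strictly smaller divergence. Hence the minimizing densities agree a.e., and identifiability
identifies the parameters.
-/

open MeasureTheory Real

open Set

noncomputable def jsIntegrand (a b : ℝ) : ℝ :=
  a * log (2 * a / (a + b)) + b * log (2 * b / (a + b))

lemma jsIntegrand_eq_of_nonneg {a q : ℝ} (ha : 0 < a) (hq : 0 ≤ q) :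
    jsIntegrand a q = a * log (2 * a) + (q * log 2 + q * log q) - (a + q) * log (a + q) := by
  have haq : 0 < a + q := by linarith
  unfold jsIntegrand
  rcases hq.eq_or_lt with rfl | hq
  · rw [log_div (by positivity) haq.ne']
    simp only [mul_zero, zero_mul, zero_div, log_zero, add_zero]
    ring
  · rw [log_div (by positivity) haq.ne', log_div (by positivity) haq.ne',
      log_mul two_ne_zero hq.ne']
    ring

lemma strictConvexOn_jsIntegrand {a : ℝ} (ha : 0 < a) :
    StrictConvexOn ℝ (Ici 0) (jsIntegrand a) := by
  set G : ℝ → ℝ := fun q => a * log (2 * a) + (q * log 2 + q * log q) - (a + q) * log (a + q)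
  have hG' : ∀ q, 0 < q → HasDerivAt G (log 2 + log q - log (a + q)) q := by
    intro q hq
    have hmul_log : HasDerivAt (fun q : ℝ => (a + q) * log (a + q)) (log (a + q) + 1) q := by
      simpa [Function.comp_def] using
        (hasDerivAt_mul_log (by linarith : a + q ≠ 0)).comp q ((hasDerivAt_id q).const_add a)
    exact (((((hasDerivAt_id q).mul_const (log 2)).add (hasDerivAt_mul_log hq.ne')).const_add
      (a * log (2 * a))).sub hmul_log).congr_deriv (by ring)
  have hG : StrictConvexOn ℝ (Ici 0) G := by
    refine StrictMonoOn.strictConvexOn_of_deriv (convex_Ici 0) ?_ ?_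
    · have hcont : Continuous fun q : ℝ => q * log q := continuous_mul_log
      exact Continuous.continuousOn (by fun_prop)
    rw [interior_Ici]
    intro x (hx : 0 < x) y (hy : 0 < y) hxy
    rw [(hG' x hx).deriv, (hG' y hy).deriv]
    -- `x (a + y) < y (a + x)` is `a x < a y`
    have : log x + log (a + y) < log y + log (a + x) := by
      rw [← log_mul hx.ne' (by positivity), ← log_mul hy.ne' (by positivity)]
      exact log_lt_log (by positivity) (by nlinarith)
    linarith
  exact hG.congr fun q hq => (jsIntegrand_eq_of_nonneg ha hq).symm

lemma abs_mul_log_two_mul_div_le {a b : ℝ} (ha : 0 ≤ a) (hb : 0 ≤ b) :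
    |a * log (2 * a / (a + b))| ≤ a * log 2 + b / 2 := by
  have hlog2 : 0 ≤ log 2 := log_nonneg one_le_two
  rcases ha.eq_or_lt with rfl | ha
  · simp only [zero_mul, abs_zero]
    positivity
  have hab : 0 < a + b := by linarith
  have ht : 0 < 2 * a / (a + b) := by positivity
  have upper : log (2 * a / (a + b)) ≤ log 2 :=
    log_le_log ht (div_le_of_le_mul₀ hab.le zero_le_two (by linarith))
  have lower : 1 - (a + b) / (2 * a) ≤ log (2 * a / (a + b)) := by
    simpa only [inv_div] using one_sub_inv_le_log_of_pos ht
  have hlower : a * (1 - (a + b) / (2 * a)) = (a - b) / 2 := by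
    field_simp
    ring
  rw [abs_le]
  constructor
  · nlinarith [mul_le_mul_of_nonneg_left lower ha.le]
  · nlinarith [mul_le_mul_of_nonneg_left upper ha.le]

section Integral

variable {E : Type*} [MeasurableSpace E] {μ : Measure E}

lemma integrable_mul_log_two_mul_div [IsFiniteMeasure μ] {f g : E → ℝ} {C : ℝ}
    (hf : Measurable f) (hg : Measurable g) (hfC : ∀ x, f x ∈ Icc 0 C)
    (hgC : ∀ x, g x ∈ Icc 0 C) :
    Integrable (fun x => f x * log (2 * f x / (f x + g x))) μ := by
  refine (integrable_const (C * log 2 + C / 2)).mono' (by fun_prop) (ae_of_all _ fun x => ?_)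
  rw [norm_eq_abs]
  refine (abs_mul_log_two_mul_div_le (hfC x).1 (hgC x).1).trans ?_
  have hlog2 : 0 ≤ log 2 := log_nonneg one_le_two
  gcongr
  exacts [(hfC x).2, (hgC x).2]

lemma integrable_jsIntegrand [IsFiniteMeasure μ] {f g : E → ℝ} {C : ℝ}
    (hf : Measurable f) (hg : Measurable g) (hfC : ∀ x, f x ∈ Icc 0 C)
    (hgC : ∀ x, g x ∈ Icc 0 C) :
    Integrable (fun x => jsIntegrand (f x) (g x)) μ := by
  have hB := integrable_mul_log_two_mul_div (μ := μ) hg hf hgC hfC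
  simp only [add_comm (g _)] at hB
  exact (integrable_mul_log_two_mul_div hf hg hfC hgC).add hB

lemma JSdiv_eq_integral_jsIntegrand [IsFiniteMeasure μ] {f g : E → ℝ} {C : ℝ}
    (hf : Measurable f) (hg : Measurable g) (hfC : ∀ x, f x ∈ Icc 0 C)
    (hgC : ∀ x, g x ∈ Icc 0 C) :
    JSdiv μ f g = (1 / 2) * ∫ x, jsIntegrand (f x) (g x) ∂μ := by
  have hB := integrable_mul_log_two_mul_div (μ := μ) hg hf hgC hfC
  simp only [add_comm (g _)] at hB
  unfold JSdiv jsIntegrand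
  rw [integral_add (integrable_mul_log_two_mul_div hf hg hfC hgC) hB]
  ring

lemma JSdiv_congr_ae {f g₁ g₂ : E → ℝ} (h : g₁ =ᵐ[μ] g₂) : JSdiv μ f g₁ = JSdiv μ f g₂ := by
  unfold JSdiv
  congr 1 <;> congr 1 <;> exact integral_congr_ae (h.mono fun x hx => by simp only [hx])

theorem integral_lt_of_strictConvexOn_of_not_ae_eq {F : E → ℝ → ℝ} {s : Set ℝ}
    {f g : E → ℝ} {a b : ℝ} (hF : ∀ x, StrictConvexOn ℝ s (F x))
    (hfs : ∀ x, f x ∈ s) (hgs : ∀ x, g x ∈ s)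
    (hFf : Integrable (fun x => F x (f x)) μ) (hFg : Integrable (fun x => F x (g x)) μ)
    (hFfg : Integrable (fun x => F x (a * f x + b * g x)) μ)
    (ha : 0 < a) (hb : 0 < b) (hab : a + b = 1) (hne : ¬ f =ᵐ[μ] g) :
    ∫ x, F x (a * f x + b * g x) ∂μ < a * ∫ x, F x (f x) ∂μ + b * ∫ x, F x (g x) ∂μ := by
  set D : E → ℝ := fun x => a * F x (f x) + b * F x (g x) - F x (a * f x + b * g x)
  have hD : 0 ≤ D := fun x => sub_nonneg.2 <|
    (hF x).convexOn.2 (hfs x) (hgs x) ha.le hb.le hab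
  have hcomb : Integrable (fun x => a * F x (f x) + b * F x (g x)) μ :=
    (hFf.const_mul a).add (hFg.const_mul b)
  have hDint : Integrable D μ := hcomb.sub hFfg
  have hDpos : 0 < ∫ x, D x ∂μ := by
    refine (integral_nonneg hD).lt_of_ne fun h => hne ?_
    filter_upwards [(integral_eq_zero_iff_of_nonneg hD hDint).1 h.symm] with x hx
    by_contra hfg
    exact (sub_pos.2 ((hF x).2 (hfs x) (hgs x) hfg ha hb hab)).ne' hx
  rwa [integral_sub hcomb hFfg,
    integral_add (hFf.const_mul a) (hFg.const_mul b), integral_const_mul, integral_const_mul,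
    sub_pos] at hDpos

theorem JSdiv_lt_of_not_ae_eq [IsFiniteMeasure μ] {f g₁ g₂ : E → ℝ} {C a b : ℝ}
    (hf : Measurable f) (hg₁ : Measurable g₁) (hg₂ : Measurable g₂)
    (hfC : ∀ x, f x ∈ Ioc 0 C) (hg₁C : ∀ x, g₁ x ∈ Icc 0 C) (hg₂C : ∀ x, g₂ x ∈ Icc 0 C)
    (ha : 0 < a) (hb : 0 < b) (hab : a + b = 1) (hne : ¬ g₁ =ᵐ[μ] g₂) :
    JSdiv μ f (fun x => a * g₁ x + b * g₂ x) < a * JSdiv μ f g₁ + b * JSdiv μ f g₂ := by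
  have hfC' : ∀ x, f x ∈ Icc 0 C := fun x => Ioc_subset_Icc_self (hfC x)
  have hgC : ∀ x, a * g₁ x + b * g₂ x ∈ Icc 0 C := fun x =>
    convex_Icc 0 C (hg₁C x) (hg₂C x) ha.le hb.le hab
  have hg : Measurable fun x => a * g₁ x + b * g₂ x := by fun_prop
  have key := integral_lt_of_strictConvexOn_of_not_ae_eq
    (fun x => strictConvexOn_jsIntegrand (hfC x).1) (fun x => (hg₁C x).1) (fun x => (hg₂C x).1)
    (integrable_jsIntegrand hf hg₁ hfC' hg₁C) (integrable_jsIntegrand hf hg₂ hfC' hg₂C)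
    (integrable_jsIntegrand hf hg hfC' hgC) ha hb hab hne
  rw [JSdiv_eq_integral_jsIntegrand hf hg hfC' hgC,
    JSdiv_eq_integral_jsIntegrand hf hg₁ hfC' hg₁C, JSdiv_eq_integral_jsIntegrand hf hg₂ hfC' hg₂C]
  linarith

end Integral

theorem stmt9_general {E : Type*} [MeasurableSpace E] (μ : Measure E) [IsFiniteMeasure μ]
    {Θ : Type*} [TopologicalSpace Θ] [CompactSpace Θ] [Nonempty Θ]
    (m M : ℝ) (hm : 0 < m)
    (pstar : E → ℝ) (p : Θ → E → ℝ)
    (hpsm : Measurable pstar) (hpm : ∀ θ, Measurable (p θ))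
    (hps : ∀ x, pstar x ∈ Set.Icc m M)
    (hpb : ∀ θ x, p θ x ∈ Set.Icc (0 : ℝ) M)
    -- identifiability
    (hident : ∀ θ₁ θ₂, p θ₁ =ᵐ[μ] p θ₂ → θ₁ = θ₂)
    -- convexity of the model
    (hconv : ∀ θ₁ θ₂, ∀ l ∈ Set.Icc (0 : ℝ) 1,
      ∃ θ, p θ =ᵐ[μ] fun x => l * p θ₁ x + (1 - l) * p θ₂ x)
    -- compactness for the Jensen-Shannon metric δ: continuity of the JS criterion
    (hcont : Continuous fun θ => JSdiv μ pstar (p θ)) :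
    ∃! θstar : Θ, ∀ θ, JSdiv μ pstar (p θstar) ≤ JSdiv μ pstar (p θ) := by
  obtain ⟨θ₀, -, hθ₀⟩ := isCompact_univ.exists_isMinOn univ_nonempty hcont.continuousOn
  refine ⟨θ₀, fun θ => hθ₀ (mem_univ θ), fun θ₁ hθ₁ => hident θ₁ θ₀ ?_⟩
  by_contra hne
  obtain ⟨θmid, hmid⟩ := hconv θ₁ θ₀ (1 / 2) ⟨by norm_num, by norm_num⟩
  have hlt := JSdiv_lt_of_not_ae_eq (a := 1 / 2) (b := 1 - 1 / 2) hpsm (hpm θ₁) (hpm θ₀)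
    (fun x => ⟨hm.trans_le (hps x).1, (hps x).2⟩) (hpb θ₁) (hpb θ₀)
    one_half_pos (by norm_num) (by norm_num) hne
  have hmid_ge : JSdiv μ pstar (p θ₀) ≤ JSdiv μ pstar (p θmid) := hθ₀ (mem_univ θmid)
  rw [JSdiv_congr_ae hmid] at hmid_ge
  linarith [hθ₁ θ₀]

/-- Existence and uniqueness of the ideal parameter `θ*` (Theorem 2): if the family
`{p_θ}` is identifiable, convex, and compact for the Jensen-Shannon metric (compactness of
`Θ` together with continuity of `θ ↦ D_JS(p*‖p_θ)`), with `m ≤ p* ≤ M` and `p_θ ≤ M`,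
then there is a unique `θ*` minimizing `θ ↦ D_JS(p*‖p_θ)`. -/
theorem stmt9 {E : Type*} [MeasurableSpace E] (μ : Measure E) [IsFiniteMeasure μ]
    {Θ : Type*} [TopologicalSpace Θ] [CompactSpace Θ] [Nonempty Θ]
    (m M : ℝ) (hm : 0 < m) (hmM : m ≤ M)
    (pstar : E → ℝ) (p : Θ → E → ℝ)
    (hpsm : Measurable pstar) (hpm : ∀ θ, Measurable (p θ))
    (hps : ∀ x, pstar x ∈ Set.Icc m M)
    (hpb : ∀ θ x, p θ x ∈ Set.Icc (0 : ℝ) M)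
    (hps1 : ∫ x, pstar x ∂μ = 1) (hp1 : ∀ θ, ∫ x, p θ x ∂μ = 1)
    -- identifiability
    (hident : ∀ θ₁ θ₂, p θ₁ =ᵐ[μ] p θ₂ → θ₁ = θ₂)
    -- convexity of the model
    (hconv : ∀ θ₁ θ₂, ∀ l ∈ Set.Icc (0 : ℝ) 1,
      ∃ θ, p θ =ᵐ[μ] fun x => l * p θ₁ x + (1 - l) * p θ₂ x)
    -- compactness for the Jensen-Shannon metric δ: continuity of the JS criterion
    (hcont : Continuous fun θ => JSdiv μ pstar (p θ)) :
    ∃! θstar : Θ, ∀ θ, JSdiv μ pstar (p θstar) ≤ JSdiv μ pstar (p θ) :=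
  stmt9_general μ m M hm pstar p hpsm hpm hps hpb hident hconv hcont
end
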